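/- Let A ∈ ℝ^{n×n} be symmetric, fix a partition of {1,…,n} into nonempty clusters S_1,…,S_r with sizes m_k, and let β ∈ ℝ. Suppose: (i) uᵀAu ≤ β·‖u‖² for every u ∈ ℝ^n satisfying Σ_{i∈S_k} u_i = 0 for every k; and (ii) for all k ≠ ℓ and all u ∈ S_k, v ∈ S_ℓ: d_u(S_k)/m_k − d_u(S_ℓ)/m_ℓ + d_v(S_ℓ)/m_ℓ − d_v(S_k)/m_k + (𝟙ᵀA_{S_kS_ℓ}𝟙)/(m_k·m_ℓ) − (𝟙ᵀA_{S_k}𝟙)/(2·m_k²) − (𝟙ᵀA_{S_ℓ}𝟙)/(2·m_ℓ²) ≥ β/(2·m_k) + β/(2·m_ℓ). Then X0 is a maximizer of SDP-PW(r): every X feasible for SDP-PW(r) satisfies trace(AX) ≤ trace(AX0). -/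

import Mathlib

open Matrix BigOperators

noncomputable section

/-- The cluster `S_k` of a cluster assignment `z`. -/
def cluster {n r : ℕ} (z : Fin n → Fin r) (k : Fin r) : Finset (Fin n) :=
  Finset.univ.filter (fun i => z i = k)

/-- The cluster size `m_k`. -/
def csize {n r : ℕ} (z : Fin n → Fin r) (k : Fin r) : ℕ := (cluster z k).card

/-- The normalized ground-truth clustering matrix `X0`. -/
def X0 {n r : ℕ} (z : Fin n → Fin r) : Matrix (Fin n) (Fin n) ℝ :=
  Matrix.of fun i j => if z i = z j then (1 : ℝ) / (csize z (z i)) else 0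

/-- `d_u(S_k) = Σ_{j ∈ S_k} A_{uj}`, the number of edges from node `u` to cluster `k`. -/
def deg {n r : ℕ} (A : Matrix (Fin n) (Fin n) ℝ) (z : Fin n → Fin r)
    (u : Fin n) (k : Fin r) : ℝ :=
  ∑ j ∈ cluster z k, A u j

/-- `𝟙ᵀ A_{S_k S_ℓ} 𝟙 = Σ_{i ∈ S_k} Σ_{j ∈ S_ℓ} A_{ij}`. -/
def blocksum {n r : ℕ} (A : Matrix (Fin n) (Fin n) ℝ) (z : Fin n → Fin r)
    (k ℓ : Fin r) : ℝ :=
  ∑ i ∈ cluster z k, ∑ j ∈ cluster z ℓ, A i j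

/-- Feasibility for SDP-PW(r): psd, entrywise nonnegative, row sums one, trace `r`. -/
def FeasiblePW {n : ℕ} (r : ℕ) (X : Matrix (Fin n) (Fin n) ℝ) : Prop :=
  X.PosSemidef ∧ (∀ i j, 0 ≤ X i j) ∧ (∀ i, ∑ j, X i j = 1) ∧ X.trace = (r : ℝ)

/-!
`X0` is the orthogonal projection `P` onto the span of the cluster indicators. With `Q = 1 - P`
split `A = H + β P + Q A Q`, where `H = dualMatrix A P β = A P + P A - P A P - β P`.
Condition (i) makes `β Q - Q A Q` positive semidefinite, so for feasible `X` we get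
`tr (Q A Q X) ≤ β tr (Q X) = β (r - tr (P X))`, i.e. `tr (A X) ≤ tr (H X) + β r`.
With `f = dualPotential A z β`, condition (ii) says exactly `H u v ≤ f u + f v` when `u` and `v`
lie in different clusters, and equality holds inside a cluster. As `X` is nonnegative with unit
row and column sums, `tr (H X) ≤ 2 ∑ f`; the same computation with equality for `X = P` gives
`tr (A P) = 2 ∑ f + β r`.
-/

section Certificate

variable {ι R : Type*} [Fintype ι]

def dualMatrix [CommRing R] (A P : Matrix ι ι R) (β : R) : Matrix ι ι R :=
  A * P + P * A - P * A * P - β • P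

theorem posSemidef_smul_sub_conj {A Q : Matrix ι ι ℝ} {β : ℝ}
    (hA : A.IsSymm) (hQ : Q.IsSymm) (hQQ : IsIdempotentElem Q)
    (h : ∀ x, (Q *ᵥ x) ⬝ᵥ A *ᵥ (Q *ᵥ x) ≤ β * ∑ i, (Q *ᵥ x) i ^ 2) :
    (β • Q - Q * A * Q).PosSemidef := by
  refine .of_dotProduct_mulVec_nonneg ?_ fun x => ?_
  · rw [IsHermitian, conjTranspose_eq_transpose_of_trivial]
    simp only [transpose_sub, transpose_smul, transpose_mul, hA.eq, hQ.eq, Matrix.mul_assoc]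
  · have hQx : ∀ y, x ⬝ᵥ Q *ᵥ y = (Q *ᵥ x) ⬝ᵥ y := fun y => by
      rw [dotProduct_mulVec, ← mulVec_transpose, hQ.eq]
    have hsq : ∑ i, (Q *ᵥ x) i ^ 2 = (Q *ᵥ x) ⬝ᵥ x :=
      calc ∑ i, (Q *ᵥ x) i ^ 2 = (Q *ᵥ x) ⬝ᵥ (Q *ᵥ x) := by simp only [dotProduct, sq]
        _ = x ⬝ᵥ (Q * Q) *ᵥ x := by rw [← mulVec_mulVec, hQx]
        _ = (Q *ᵥ x) ⬝ᵥ x := by rw [hQQ.eq, hQx]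
    have := hsq ▸ h x
    simp only [star_trivial, sub_mulVec, smul_mulVec, ← mulVec_mulVec, dotProduct_sub,
      dotProduct_smul, hQx, smul_eq_mul] at this ⊢
    linarith

variable [DecidableEq ι]

theorem eq_dualMatrix_add [CommRing R] (A P : Matrix ι ι R) (β : R) :
    A = dualMatrix A P β + β • P + (1 - P) * A * (1 - P) := by
  simp only [dualMatrix, sub_mul, mul_sub, one_mul, mul_one]
  abel

theorem trace_mul_eq_dualMatrix [CommRing R] {A P : Matrix ι ι R} (β : R)
    (hP : IsIdempotentElem P) :
    (A * P).trace = (dualMatrix A P β * P).trace + β * P.trace := by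
  conv_lhs => rw [eq_dualMatrix_add A P β]
  rw [add_mul, Matrix.mul_assoc, hP.one_sub_mul_self, Matrix.mul_zero, add_zero, add_mul,
    trace_add, smul_mul_assoc, hP.eq, trace_smul, smul_eq_mul]

theorem Matrix.PosSemidef.trace_mul_nonneg {M X : Matrix ι ι ℝ} (hM : M.PosSemidef)
    (hX : X.PosSemidef) : 0 ≤ (M * X).trace := by
  open MatrixOrder in
  obtain ⟨B, rfl⟩ := CStarAlgebra.nonneg_iff_eq_star_mul_self.mp hX.nonneg
  rw [← Matrix.mul_assoc, trace_mul_cycle, star_eq_conjTranspose]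
  exact (hM.mul_mul_conjTranspose_same B).trace_nonneg

theorem trace_mul_le_dualMatrix {A P X : Matrix ι ι ℝ} {β : ℝ} (hX : X.PosSemidef)
    (hA : (β • (1 - P) - (1 - P) * A * (1 - P)).PosSemidef) :
    (A * X).trace ≤ (dualMatrix A P β * X).trace + β * X.trace := by
  have h := hA.trace_mul_nonneg hX
  conv_lhs => rw [eq_dualMatrix_add A P β]
  simp only [add_mul, sub_mul, smul_mul_assoc, one_mul, trace_add, trace_sub, trace_smul,
    smul_eq_mul] at h ⊢
  linarith

end Certificate

section Stochastic

variable {ι R : Type*} [Fintype ι] {X : Matrix ι ι R}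

theorem Matrix.IsSymm.sum_apply_left [AddCommMonoid R] {c : R} (hX : X.IsSymm)
    (hrow : ∀ i, ∑ j, X i j = c) (j : ι) : ∑ i, X i j = c :=
  (Finset.sum_congr rfl fun i _ => hX.apply j i).trans (hrow j)

theorem trace_of_add_mul_eq_two_mul_sum [CommSemiring R] (f : ι → R)
    (hrow : ∀ i, ∑ j, X i j = 1) (hcol : ∀ j, ∑ i, X i j = 1) :
    ((of fun u v => f u + f v) * X).trace = 2 * ∑ i, f i := by
  simp only [trace, diag, mul_apply, of_apply, add_mul, Finset.sum_add_distrib]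
  rw [Finset.sum_comm (f := fun u v => f v * X v u)]
  simp only [← Finset.mul_sum, hrow, hcol, mul_one]
  ring

theorem trace_mul_le_of_le_add [CommSemiring R] [PartialOrder R] [IsOrderedRing R]
    {H : Matrix ι ι R} {f : ι → R} (hX : ∀ i j, 0 ≤ X i j)
    (hrow : ∀ i, ∑ j, X i j = 1) (hcol : ∀ j, ∑ i, X i j = 1)
    (hH : ∀ u v, H u v ≤ f u + f v) : (H * X).trace ≤ 2 * ∑ i, f i := by
  rw [← trace_of_add_mul_eq_two_mul_sum f hrow hcol]
  exact Finset.sum_le_sum fun u _ => Finset.sum_le_sum fun v _ =>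
    mul_le_mul_of_nonneg_right (hH u v) (hX v u)

theorem trace_mul_eq_of_eq_add [CommSemiring R] {H : Matrix ι ι R} {f : ι → R}
    (hrow : ∀ i, ∑ j, X i j = 1) (hcol : ∀ j, ∑ i, X i j = 1)
    (hH : ∀ u v, X v u ≠ 0 → H u v = f u + f v) : (H * X).trace = 2 * ∑ i, f i := by
  rw [← trace_of_add_mul_eq_two_mul_sum f hrow hcol]
  refine Finset.sum_congr rfl fun u _ => Finset.sum_congr rfl fun v _ => ?_
  by_cases h : X v u = 0
  · simp [h]
  · simp [hH u v h]

end Stochastic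

section Clusters

variable {n r : ℕ} (z : Fin n → Fin r)

theorem mem_cluster {i : Fin n} {k : Fin r} : i ∈ cluster z k ↔ z i = k := by
  simp [cluster]

theorem csize_ne_zero (i : Fin n) : (csize z (z i) : ℝ) ≠ 0 :=
  Nat.cast_ne_zero.2 (Finset.card_ne_zero_of_mem ((mem_cluster z).2 rfl))

theorem X0_apply_of_ne {i j : Fin n} (h : z i ≠ z j) : X0 z i j = 0 := by
  simp [X0, h]

theorem isSymm_X0 : (X0 z).IsSymm := by
  ext i j
  by_cases h : z i = z j <;> simp [X0, h, eq_comm]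

theorem sum_cluster_X0_apply (l : Fin n) (k : Fin r) :
    ∑ j ∈ cluster z k, X0 z l j = if z l = k then 1 else 0 := by
  have hterm : ∀ j ∈ cluster z k, X0 z l j = if z l = k then 1 / (csize z k : ℝ) else 0 :=
    fun j hj => by by_cases h : z l = k <;> simp [X0, h, (mem_cluster z).1 hj]
  rw [Finset.sum_congr rfl hterm]
  split_ifs with h
  · subst h
    rw [Finset.sum_const, nsmul_eq_mul]
    exact mul_one_div_cancel (csize_ne_zero z l)
  · simp

theorem sum_X0_apply (l : Fin n) : ∑ j, X0 z l j = 1 :=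
  calc ∑ j, X0 z l j = ∑ k, ∑ j ∈ cluster z k, X0 z l j := (Finset.sum_fiberwise _ z _).symm
    _ = 1 := by simp [sum_cluster_X0_apply]

theorem mul_X0_apply (M : Matrix (Fin n) (Fin n) ℝ) (u v : Fin n) :
    (M * X0 z) u v = (∑ j ∈ cluster z (z v), M u j) / csize z (z v) := by
  rw [mul_apply, Finset.sum_div, cluster, Finset.sum_filter]
  refine Finset.sum_congr rfl fun j _ => ?_
  by_cases h : z j = z v <;> simp [X0, h, div_eq_mul_inv]

theorem X0_mul_apply (M : Matrix (Fin n) (Fin n) ℝ) (u v : Fin n) :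
    (X0 z * M) u v = (∑ j ∈ cluster z (z u), M j v) / csize z (z u) := by
  rw [← transpose_apply (X0 z * M), transpose_mul, (isSymm_X0 z).eq, mul_X0_apply]
  rfl

theorem isIdempotentElem_X0 : IsIdempotentElem (X0 z) := by
  ext u v
  rw [mul_X0_apply, sum_cluster_X0_apply]
  by_cases h : z u = z v <;> simp [X0, h]

theorem trace_X0 (hz : Function.Surjective z) : (X0 z).trace = r := by
  calc (X0 z).trace = ∑ k, ∑ i ∈ cluster z k, X0 z i i := (Finset.sum_fiberwise _ z _).symm
    _ = ∑ k : Fin r, 1 := Finset.sum_congr rfl fun k _ => ?_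
    _ = r := by simp
  obtain ⟨i, rfl⟩ := hz k
  have hdiag : ∀ j ∈ cluster z (z i), X0 z j j = 1 / csize z (z i) :=
    fun j hj => by simp [X0, (mem_cluster z).1 hj]
  rw [Finset.sum_congr rfl hdiag, Finset.sum_const, nsmul_eq_mul]
  exact mul_one_div_cancel (csize_ne_zero z i)

theorem sum_cluster_one_sub_X0_mulVec (x : Fin n → ℝ) (k : Fin r) :
    ∑ i ∈ cluster z k, ((1 - X0 z) *ᵥ x) i = 0 := by
  have hX0 : ∑ i ∈ cluster z k, (X0 z *ᵥ x) i = ∑ i ∈ cluster z k, x i := by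
    simp only [mulVec, dotProduct, Finset.sum_comm (s := cluster z k), ← Finset.sum_mul]
    simp only [(isSymm_X0 z).apply, sum_cluster_X0_apply, ite_mul, one_mul, zero_mul]
    rw [← Finset.sum_filter]
    rfl
  simp [sub_mulVec, hX0]

end Clusters

section DualCertificate

variable {n r : ℕ} (A : Matrix (Fin n) (Fin n) ℝ) (z : Fin n → Fin r) (β : ℝ)

def dualPotential (u : Fin n) : ℝ :=
  deg A z u (z u) / csize z (z u) - blocksum A z (z u) (z u) / (2 * (csize z (z u) : ℝ) ^ 2)
    - β / (2 * csize z (z u))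

theorem dualMatrix_X0_apply (hA : A.IsSymm) (u v : Fin n) :
    dualMatrix A (X0 z) β u v = deg A z u (z v) / csize z (z v) + deg A z v (z u) / csize z (z u)
      - blocksum A z (z u) (z v) / (csize z (z u) * csize z (z v)) - β * X0 z u v := by
  have hPAP : (X0 z * A * X0 z) u v
      = blocksum A z (z u) (z v) / (csize z (z u) * csize z (z v)) := by
    simp only [mul_X0_apply, X0_mul_apply, ← Finset.sum_div, blocksum]
    rw [Finset.sum_comm, div_div]
  simp only [dualMatrix, Matrix.sub_apply, Matrix.add_apply, Matrix.smul_apply, smul_eq_mul, hPAP,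
    mul_X0_apply, X0_mul_apply, deg, hA.apply]

theorem dualMatrix_X0_apply_of_eq (hA : A.IsSymm) {u v : Fin n} (h : z u = z v) :
    dualMatrix A (X0 z) β u v = dualPotential A z β u + dualPotential A z β v := by
  rw [dualMatrix_X0_apply A z β hA, X0, of_apply, if_pos h, dualPotential, dualPotential, ← h]
  ring

theorem dualMatrix_X0_apply_le (hA : A.IsSymm)
    (hdeg : ∀ k ℓ : Fin r, k ≠ ℓ → ∀ u v : Fin n, z u = k → z v = ℓ →
      deg A z u k / (csize z k : ℝ) - deg A z u ℓ / (csize z ℓ : ℝ)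
        + deg A z v ℓ / (csize z ℓ : ℝ) - deg A z v k / (csize z k : ℝ)
        + blocksum A z k ℓ / ((csize z k : ℝ) * (csize z ℓ : ℝ))
        - blocksum A z k k / (2 * (csize z k : ℝ) ^ 2)
        - blocksum A z ℓ ℓ / (2 * (csize z ℓ : ℝ) ^ 2)
      ≥ β / (2 * (csize z k : ℝ)) + β / (2 * (csize z ℓ : ℝ)))
    (u v : Fin n) :
    dualMatrix A (X0 z) β u v ≤ dualPotential A z β u + dualPotential A z β v := by
  by_cases h : z u = z v
  · exact (dualMatrix_X0_apply_of_eq A z β hA h).le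
  · have := hdeg _ _ h u v rfl rfl
    rw [dualMatrix_X0_apply A z β hA, X0_apply_of_ne z h, dualPotential, dualPotential]
    linarith

theorem trace_dualMatrix_X0_mul_X0 (hA : A.IsSymm) :
    (dualMatrix A (X0 z) β * X0 z).trace = 2 * ∑ u, dualPotential A z β u :=
  trace_mul_eq_of_eq_add (sum_X0_apply z) ((isSymm_X0 z).sum_apply_left (sum_X0_apply z))
    fun _ _ h => dualMatrix_X0_apply_of_eq A z β hA (not_imp_comm.1 (X0_apply_of_ne z) h).symm

end DualCertificate

theorem deterministic_sufficient_conditions (n r : ℕ)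
    (z : Fin n → Fin r) (hz : Function.Surjective z)
    (A : Matrix (Fin n) (Fin n) ℝ) (hA : A.IsSymm) (β : ℝ)
    (hquad : ∀ u : Fin n → ℝ, (∀ k, ∑ i ∈ cluster z k, u i = 0) →
      u ⬝ᵥ A.mulVec u ≤ β * ∑ i, u i ^ 2)
    (hdeg : ∀ k ℓ : Fin r, k ≠ ℓ → ∀ u v : Fin n, z u = k → z v = ℓ →
      deg A z u k / (csize z k : ℝ) - deg A z u ℓ / (csize z ℓ : ℝ)
        + deg A z v ℓ / (csize z ℓ : ℝ) - deg A z v k / (csize z k : ℝ)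
        + blocksum A z k ℓ / ((csize z k : ℝ) * (csize z ℓ : ℝ))
        - blocksum A z k k / (2 * (csize z k : ℝ) ^ 2)
        - blocksum A z ℓ ℓ / (2 * (csize z ℓ : ℝ) ^ 2)
      ≥ β / (2 * (csize z k : ℝ)) + β / (2 * (csize z ℓ : ℝ))) :
    ∀ X : Matrix (Fin n) (Fin n) ℝ, FeasiblePW r X →
      (A * X).trace ≤ (A * X0 z).trace := by
  rintro X ⟨hpsd, hnonneg, hrow, htrace⟩
  have hX : X.IsSymm := isHermitian_iff_isSymm.1 hpsd.isHermitian
  have hcert : (β • (1 - X0 z) - (1 - X0 z) * A * (1 - X0 z)).PosSemidef :=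
    posSemidef_smul_sub_conj hA (isSymm_one.sub (isSymm_X0 z)) (isIdempotentElem_X0 z).one_sub
      fun x => hquad _ (sum_cluster_one_sub_X0_mulVec z x)
  calc (A * X).trace
      ≤ (dualMatrix A (X0 z) β * X).trace + β * X.trace := trace_mul_le_dualMatrix hpsd hcert
    _ ≤ 2 * ∑ u, dualPotential A z β u + β * r := by
      rw [htrace]
      gcongr
      exact trace_mul_le_of_le_add hnonneg hrow (hX.sum_apply_left hrow)
        (dualMatrix_X0_apply_le A z β hA hdeg)
    _ = (dualMatrix A (X0 z) β * X0 z).trace + β * (X0 z).trace := by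
      rw [trace_X0 z hz, trace_dualMatrix_X0_mul_X0 A z β hA]
    _ = (A * X0 z).trace := (trace_mul_eq_dualMatrix β (isIdempotentElem_X0 z)).symm
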